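/- Let v₁, …, v_k ∈ D(ℝ)^(n) be tropically independent vectors and let v ∈ D(ℝ)^(n) be a tangible vector that is not the zero vector. Then there exist indices i₁ < ⋯ < i_{k−1} in {1,…,k} such that the vectors v_{i₁}, …, v_{i_{k−1}}, v are tropically independent. -/

import Mathlib

noncomputable section

/-- The extended tropical semifield `D(ℝ)`: `bot` is `-∞`; `nb g r` is the element of
underlying value `r : ℝ`, ghost if `g = true`, tangible if `g = false`. -/
inductive DR : Type where
  | bot : DR
  | nb : Bool → ℝ → DR

namespace DR

/-- Supertropical addition on `D(ℝ)`. -/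
def add : DR → DR → DR
  | bot, y => y
  | x, bot => x
  | nb b r, nb c s => if r < s then nb c s else if s < r then nb b r else nb true r

/-- Supertropical multiplication on `D(ℝ)`. -/
def mul : DR → DR → DR
  | bot, _ => bot
  | _, bot => bot
  | nb b r, nb c s => nb (b || c) (r + s)

theorem bot_add (x : DR) : add bot x = x := by cases x <;> rfl

theorem add_bot (x : DR) : add x bot = x := by cases x <;> rfl

theorem bot_mul (x : DR) : mul bot x = bot := by cases x <;> rfl

theorem mul_bot (x : DR) : mul x bot = bot := by cases x <;> rfl

theorem add_comm' (x y : DR) : add x y = add y x := by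
  cases x <;> cases y <;> (try rfl)
  simp only [add]
  split_ifs <;>
    first
      | rfl
      | (exfalso; linarith)
      | (congr 1 <;> first | rfl | linarith)

theorem add_assoc' (x y z : DR) : add (add x y) z = add x (add y z) := by
  cases x with
  | bot => rw [bot_add, bot_add]
  | nb b r =>
    cases y with
    | bot => rw [add_bot, bot_add]
    | nb c s =>
      cases z with
      | bot => rw [add_bot, add_bot]
      | nb d t =>
        simp only [add]
        split_ifs <;>
          simp only [add] <;>
          (try split_ifs) <;>
          first
            | rfl
            | (exfalso; linarith)
            | (congr 1 <;> first | rfl | linarith)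

theorem mul_comm' (x y : DR) : mul x y = mul y x := by
  cases x <;> cases y <;> (try rfl)
  simp [mul, Bool.or_comm, add_comm]

theorem mul_assoc' (x y z : DR) : mul (mul x y) z = mul x (mul y z) := by
  cases x <;> cases y <;> cases z <;> (try rfl) <;>
    simp [mul, Bool.or_assoc, add_assoc]

theorem one_mul' (x : DR) : mul (nb false 0) x = x := by
  cases x <;> simp [mul]

theorem left_distrib' (x y z : DR) : mul x (add y z) = add (mul x y) (mul x z) := by
  cases x with
  | bot => simp [bot_mul, bot_add]
  | nb b r =>
    cases y with
    | bot => simp [bot_add, mul_bot]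
    | nb c s =>
      cases z with
      | bot => simp [add_bot, mul_bot]
      | nb d t =>
        simp only [mul, add]
        split_ifs <;>
          simp only [mul, add, Bool.or_true, Bool.true_or] <;>
          (try split_ifs) <;>
          first
            | rfl
            | (exfalso; linarith)
            | (congr 1 <;> first | rfl | linarith)

theorem right_distrib' (x y z : DR) : mul (add x y) z = add (mul x z) (mul y z) := by
  rw [mul_comm' (add x y) z, left_distrib', mul_comm' z x, mul_comm' z y]

instance : Add DR := ⟨add⟩
instance : Zero DR := ⟨bot⟩
instance : Mul DR := ⟨mul⟩
instance : One DR := ⟨nb false 0⟩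

instance : AddCommMonoid DR where
  add := add
  add_assoc := add_assoc'
  zero := bot
  zero_add := bot_add
  add_zero := add_bot
  add_comm := add_comm'
  nsmul := nsmulRec

instance : CommMonoid DR where
  mul := mul
  mul_assoc := mul_assoc'
  one := nb false 0
  one_mul := one_mul'
  mul_one := fun x => by show mul x (nb false 0) = x; rw [mul_comm']; exact one_mul' x
  mul_comm := mul_comm'
  npow := npowRec

instance : CommSemiring DR where
  __ := (inferInstance : AddCommMonoid DR)
  __ := (inferInstance : CommMonoid DR)
  left_distrib := left_distrib'
  right_distrib := right_distrib'
  zero_mul := bot_mul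
  mul_zero := mul_bot

/-- The ghost ideal `G₀ = ℝ^ν ∪ {-∞}` as a predicate. -/
def IsGhost : DR → Prop
  | bot => True
  | nb b _ => b = true

/-- The tangible elements `T = ℝ` as a predicate. -/
def Tangible : DR → Prop
  | nb false _ => True
  | _ => False

/-- Membership in `T ∪ {-∞}`. -/
def TangibleOrBot (x : DR) : Prop := x = bot ∨ Tangible x

/-- The underlying value in `ℝ ∪ {-∞}`. -/
def val : DR → WithBot ℝ
  | bot => ⊥
  | nb _ r => (r : WithBot ℝ)

/-- `x ≤_ν y` : comparison of underlying values, `-∞` smallest. -/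
def nuLe (x y : DR) : Prop := val x ≤ val y

/-- `x <_ν y` : strict comparison of underlying values, `-∞` smallest. -/
def nuLt (x y : DR) : Prop := val x < val y

/-- The tangible lift `x̂` of `x` (with `hat bot = bot`). -/
def hat : DR → DR
  | bot => bot
  | nb _ r => nb false r

/-- The ghost map `ν`. -/
def nu : DR → DR
  | bot => bot
  | nb _ r => nb true r

/-- The ghost-surpass relation `x ⊨ y` on `D(ℝ)`. -/
def GhostSurp (x y : DR) : Prop := ∃ c : DR, IsGhost c ∧ x = y + c

end DR

open DR

/-- A vector in `D(ℝ)^(n)` lies in the ghost submodule `G₀^(n)`. -/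
def GhostVec {n : ℕ} (v : Fin n → DR) : Prop := ∀ j, IsGhost (v j)

/-- A tangible vector: all entries in `T ∪ {-∞}`. -/
def TangibleVec {n : ℕ} (v : Fin n → DR) : Prop := ∀ j, TangibleOrBot (v j)

/-- The ghost-surpass relation `v ⊨ w` on vectors. -/
def GhostSurpVec {n : ℕ} (v w : Fin n → DR) : Prop :=
  ∃ u : Fin n → DR, GhostVec u ∧ v = w + u

/-- A family of vectors is tropically dependent. -/
def TropDep {ι : Type*} [Fintype ι] {n : ℕ} (w : ι → Fin n → DR) : Prop :=
  ∃ I : Finset ι, I.Nonempty ∧ ∃ α : ι → DR, (∀ i ∈ I, Tangible (α i)) ∧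
    ∀ j : Fin n, IsGhost (∑ i ∈ I, α i * w i j)

/-- A family of vectors is tropically independent. -/
def TropIndep {ι : Type*} [Fintype ι] {n : ℕ} (w : ι → Fin n → DR) : Prop := ¬ TropDep w

/-- A set of vectors is tropically dependent. -/
def SetTropDep {n : ℕ} (S : Set (Fin n → DR)) : Prop :=
  ∃ I : Finset (Fin n → DR), ↑I ⊆ S ∧ I.Nonempty ∧
    ∃ α : (Fin n → DR) → DR, (∀ w ∈ I, Tangible (α w)) ∧
      ∀ j : Fin n, IsGhost (∑ w ∈ I, α w * w j)

/-- A set of vectors is tropically independent. -/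
def SetTropIndep {n : ℕ} (S : Set (Fin n → DR)) : Prop := ¬ SetTropDep S

/-- A d-base of `V`: a maximal tropically independent subset of `V`. -/
def IsDBase {n : ℕ} (V S : Set (Fin n → DR)) : Prop :=
  S ⊆ V ∧ SetTropIndep S ∧ ∀ S', S ⊆ S' → S' ⊆ V → SetTropIndep S' → S' = S

/-- The rank of `V`: the maximal number of elements of a d-base of `V`. -/
noncomputable def trank {n : ℕ} (V : Set (Fin n → DR)) : ℕ :=
  sSup {m | ∃ S, IsDBase V S ∧ S.Finite ∧ S.ncard = m}

/-- `v` is tropically spanned by `S`. -/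
def SpannedBy {n : ℕ} (S : Set (Fin n → DR)) (v : Fin n → DR) : Prop :=
  ∃ I : Finset (Fin n → DR), ↑I ⊆ S ∧ I.Nonempty ∧
    ∃ α : (Fin n → DR) → DR, (∀ w ∈ I, Tangible (α w)) ∧
      GhostSurpVec v (fun j => ∑ w ∈ I, α w * w j)

/-- The tropical determinant (permanent) of a square matrix over `D(ℝ)`. -/
noncomputable def tperm {k : ℕ} (A : Matrix (Fin k) (Fin k) DR) : DR :=
  ∑ π : Equiv.Perm (Fin k), ∏ i, A (π i) i

/-! If no choice of `k - 1` of the `wᵢ` together with `v` were independent, then (the `wᵢ` being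
independent) dropping `wᵢ` would leave a relation `v + ∑_{j ≠ i} a_{ij} w_j ∈ G₀^(n)` with
coefficients in `T ∪ {-∞}`. Let `γ_j` be the tangible lift of the column maximum `∑_i a_{ij}`.
Then `∑_j γ_j w_j ∈ G₀^(n)`: at a coordinate where this failed, one term `γ_{j₀} w_{j₀}` would
strictly dominate; the row `p` attaining the maximum of column `j₀` forces `v` to equal that term
there, while row `j₀`, in which `a_{j₀ j₀} = -∞`, stays strictly below it, so that row could not
be ghost. Since `v ≠ 0` some `γ_j` is finite, and the `wᵢ` would be dependent. -/

namespace DR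

theorem zero_def : (0 : DR) = bot := rfl

theorem not_isGhost_iff_tangible {x : DR} : ¬ IsGhost x ↔ Tangible x := by
  rcases x with _ | ⟨_ | _, r⟩ <;> simp [IsGhost, Tangible]

theorem Tangible.not_isGhost {x : DR} (h : Tangible x) : ¬ IsGhost x :=
  not_isGhost_iff_tangible.2 h

theorem Tangible.ne_zero {x : DR} (h : Tangible x) : x ≠ 0 := by
  rintro rfl
  exact h

theorem Tangible.tangibleOrBot {x : DR} (h : Tangible x) : TangibleOrBot x := Or.inr h

theorem Tangible.exists_mul_eq_one {x : DR} (h : Tangible x) : ∃ y, Tangible y ∧ y * x = 1 := by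
  rcases x with _ | ⟨_ | _, r⟩
  · exact h.elim
  · exact ⟨nb false (-r), trivial, by simp [HMul.hMul, Mul.mul, mul, OfNat.ofNat, One.one]⟩
  · exact h.elim

theorem tangible_mul_iff {x y : DR} : Tangible (x * y) ↔ Tangible x ∧ Tangible y := by
  rcases x with _ | ⟨_ | _, r⟩ <;> rcases y with _ | ⟨_ | _, s⟩ <;>
    simp [Tangible, HMul.hMul, Mul.mul, mul]

theorem TangibleOrBot.mul {x y : DR} (hx : TangibleOrBot x) (hy : TangibleOrBot y) :
    TangibleOrBot (x * y) := by
  rcases hx with rfl | hx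
  · exact Or.inl (zero_mul y)
  rcases hy with rfl | hy
  · exact Or.inl (mul_zero x)
  · exact Or.inr (tangible_mul_iff.2 ⟨hx, hy⟩)

theorem IsGhost.mul_left {y : DR} (hy : IsGhost y) (x : DR) : IsGhost (x * y) := by
  by_contra h
  exact not_isGhost_iff_tangible.2 (tangible_mul_iff.1 (not_isGhost_iff_tangible.1 h)).2 hy

theorem val_eq_bot_iff {x : DR} : val x = ⊥ ↔ x = 0 := by
  cases x <;> simp [val, zero_def]

theorem val_add (x y : DR) : val (x + y) = val x ⊔ val y := by
  rcases x with _ | ⟨b, r⟩ <;> rcases y with _ | ⟨c, s⟩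
  · rfl
  · exact (bot_sup_eq _).symm
  · exact (sup_bot_eq _).symm
  · show val (add _ _) = _
    simp only [add]
    split_ifs with h₁ h₂ <;> simp only [val]
    · exact (sup_eq_right.2 (WithBot.coe_le_coe.2 h₁.le)).symm
    · exact (sup_eq_left.2 (WithBot.coe_le_coe.2 h₂.le)).symm
    · rw [le_antisymm (not_lt.1 h₂) (not_lt.1 h₁), sup_idem]

theorem val_mul (x y : DR) : val (x * y) = val x + val y := by
  rcases x with _ | ⟨b, r⟩ <;> rcases y with _ | ⟨c, s⟩ <;> rfl

theorem val_sum {ι : Type*} (s : Finset ι) (g : ι → DR) :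
    val (∑ i ∈ s, g i) = s.sup fun i => val (g i) := by
  classical
  induction s using Finset.induction_on with
  | empty => rfl
  | insert a s ha ih => rw [Finset.sum_insert ha, Finset.sup_insert, val_add, ih]

theorem add_eq_left_of_val_lt {x y : DR} (h : val y < val x) : x + y = x := by
  rcases x with _ | ⟨b, r⟩ <;> rcases y with _ | ⟨c, s⟩
  · exact absurd h (lt_irrefl _)
  · exact absurd h not_lt_bot
  · rfl
  · show add _ _ = _
    have h' : s < r := WithBot.coe_lt_coe.1 h
    simp [add, h', not_lt.2 h'.le]

theorem tangible_add_iff {x y : DR} :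
    Tangible (x + y) ↔ (Tangible x ∧ val y < val x) ∨ (Tangible y ∧ val x < val y) := by
  rcases x with _ | ⟨_ | _, r⟩ <;> rcases y with _ | ⟨_ | _, s⟩ <;>
    simp [Tangible, val, HAdd.hAdd, Add.add, add] <;> split_ifs <;> simp_all <;> linarith

theorem eq_of_isGhost_add {x y : DR} (hx : TangibleOrBot x) (hy : Tangible y)
    (h : IsGhost (x + y)) : x = y := by
  rcases hx with rfl | hx
  · exact absurd (zero_add y ▸ h) hy.not_isGhost
  · rcases x with _ | ⟨_ | _, r⟩ <;> rcases y with _ | ⟨_ | _, s⟩ <;> simp only [Tangible] at hx hy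
    change IsGhost (add _ _) at h
    simp only [add] at h
    split_ifs at h with h₁ h₂ <;> simp only [IsGhost, Bool.false_eq_true] at h
    rw [le_antisymm (not_lt.1 h₂) (not_lt.1 h₁)]

theorem val_hat (x : DR) : val (hat x) = val x := by
  cases x <;> rfl

theorem tangibleOrBot_hat (x : DR) : TangibleOrBot (hat x) := by
  cases x
  · exact Or.inl rfl
  · exact Or.inr trivial

theorem exists_dominant_of_tangible_sum {ι : Type*} {s : Finset ι} {g : ι → DR}
    (h : Tangible (∑ i ∈ s, g i)) :
    ∃ i₀ ∈ s, Tangible (g i₀) ∧ ∀ i ∈ s, i ≠ i₀ → val (g i) < val (g i₀) := by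
  classical
  induction s using Finset.induction_on with
  | empty => exact absurd rfl h.ne_zero
  | insert a s ha ih =>
    rw [Finset.sum_insert ha, tangible_add_iff] at h
    rcases h with ⟨ha_tan, hlt⟩ | ⟨hs_tan, hlt⟩
    · refine ⟨a, Finset.mem_insert_self a s, ha_tan, fun i hi hia => ?_⟩
      have hi : i ∈ s := (Finset.mem_insert.1 hi).resolve_left hia
      exact lt_of_le_of_lt (val_sum s g ▸ Finset.le_sup (f := fun i => val (g i)) hi) hlt
    · obtain ⟨i₀, hi₀, hi₀_tan, hdom⟩ := ih hs_tan
      have hsum_le : val (∑ i ∈ s, g i) ≤ val (g i₀) := by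
        rw [val_sum]
        refine Finset.sup_le fun i hi => ?_
        rcases eq_or_ne i i₀ with rfl | hne
        · exact le_rfl
        · exact (hdom i hi hne).le
      refine ⟨i₀, Finset.mem_insert_of_mem hi₀, hi₀_tan, fun i hi hne => ?_⟩
      rcases Finset.mem_insert.1 hi with rfl | hi
      · exact hlt.trans_le hsum_le
      · exact hdom i hi hne

theorem sum_eq_of_dominant {ι : Type*} {s : Finset ι} {g : ι → DR} {i₀ : ι} (hi₀ : i₀ ∈ s)
    (hdom : ∀ i ∈ s, i ≠ i₀ → val (g i) < val (g i₀)) : ∑ i ∈ s, g i = g i₀ := by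
  classical
  rw [← Finset.add_sum_erase s g hi₀]
  rcases (s.erase i₀).eq_empty_or_nonempty with hempty | ⟨i, hi⟩
  · rw [hempty, Finset.sum_empty, add_zero]
  · refine add_eq_left_of_val_lt ?_
    have hpos : ⊥ < val (g i₀) :=
      bot_le.trans_lt (hdom i (Finset.mem_of_mem_erase hi) (Finset.ne_of_mem_erase hi))
    rw [val_sum, Finset.sup_lt_iff hpos]
    exact fun j hj => hdom j (Finset.mem_of_mem_erase hj) (Finset.ne_of_mem_erase hj)

end DR

open DR

theorem tropDep_iff_exists_coeff {ι : Type*} [Fintype ι] {n : ℕ} (w : ι → Fin n → DR) :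
    TropDep w ↔ ∃ β : ι → DR, (∀ i, TangibleOrBot (β i)) ∧ β ≠ 0 ∧
      ∀ j, IsGhost (∑ i, β i * w i j) := by
  classical
  constructor
  · rintro ⟨I, ⟨i₀, hi₀⟩, α, hα, hghost⟩
    refine ⟨fun i => if i ∈ I then α i else 0, fun i => ?_, ?_, fun j => ?_⟩
    · by_cases hi : i ∈ I
      · exact Or.inr (by simpa [hi] using hα i hi)
      · exact Or.inl (by simp [hi, zero_def])
    · exact Function.ne_iff.2 ⟨i₀, by simpa [hi₀] using (hα i₀ hi₀).ne_zero⟩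
    · simpa only [ite_mul, zero_mul, Finset.sum_ite_mem, Finset.univ_inter] using hghost j
  · rintro ⟨β, hβ, hβ0, hghost⟩
    obtain ⟨i₀, hi₀⟩ := Function.ne_iff.1 hβ0
    refine ⟨Finset.univ.filter (β · ≠ 0), ⟨i₀, by simpa using hi₀⟩, β,
      fun i hi => (hβ i).resolve_left (Finset.mem_filter.1 hi).2, fun j => ?_⟩
    rw [Finset.sum_filter_of_ne (p := (β · ≠ 0)) fun i _ h hβi => h (by rw [hβi, zero_mul])]
    exact hghost j

theorem TropIndep.comp {ι κ : Type*} [Fintype ι] [Fintype κ] {n : ℕ} {w : ι → Fin n → DR}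
    (hw : TropIndep w) (e : κ → ι) (he : Function.Injective e) : TropIndep (w ∘ e) := by
  rintro ⟨I, hI, α, hα, hghost⟩
  refine hw ⟨I.map ⟨e, he⟩, hI.map, Function.extend e α 0, ?_, fun j => ?_⟩
  · simpa [he.extend_apply] using hα
  · simpa [he.extend_apply] using hghost j

theorem exists_isGhost_add_sum_of_tropDep_snoc {n s : ℕ} {u : Fin s → Fin n → DR}
    {v : Fin n → DR} (hu : TropIndep u) (h : TropDep (Fin.snoc u v : Fin (s + 1) → Fin n → DR)) :
    ∃ b : Fin s → DR, (∀ j, TangibleOrBot (b j)) ∧ ∀ m, IsGhost (v m + ∑ j, b j * u j m) := by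
  obtain ⟨β, hβ, hβ0, hghost⟩ := (tropDep_iff_exists_coeff _).1 h
  simp only [Fin.sum_univ_castSucc, Fin.snoc_castSucc, Fin.snoc_last] at hghost
  rcases hβ (Fin.last s) with hlast | hlast
  · refine absurd ((tropDep_iff_exists_coeff u).2 ⟨β ∘ Fin.castSucc, fun j => hβ _, ?_, ?_⟩) hu
    · refine fun hzero => hβ0 (funext fun i => Fin.lastCases hlast (fun j => ?_) i)
      exact congrFun hzero j
    · simpa [hlast, ← zero_def] using hghost
  · obtain ⟨y, hy, hyβ⟩ := hlast.exists_mul_eq_one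
    refine ⟨fun j => y * β j.castSucc, fun j => hy.tangibleOrBot.mul (hβ _), fun m => ?_⟩
    have := (hghost m).mul_left y
    simpa only [mul_add, ← mul_assoc, hyβ, one_mul, Finset.mul_sum, add_comm] using this

theorem isGhost_sum_hat_sum_mul {ι : Type*} [Fintype ι] {a : ι → ι → DR} {x : ι → DR} {c : DR}
    (ha : ∀ i j, TangibleOrBot (a i j)) (hdiag : ∀ i, a i i = 0) (hc : TangibleOrBot c)
    (h : ∀ i, IsGhost (c + ∑ j, a i j * x j)) :
    IsGhost (∑ j, hat (∑ i, a i j) * x j) := by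
  by_contra hng
  obtain ⟨j₀, -, hj₀, hdom⟩ := exists_dominant_of_tangible_sum (not_isGhost_iff_tangible.1 hng)
  have hlt : ∀ i j, j ≠ j₀ → val (a i j * x j) < val (hat (∑ i, a i j₀) * x j₀) := by
    refine fun i j hj => lt_of_le_of_lt ?_ (hdom j (Finset.mem_univ j) hj)
    rw [val_mul, val_mul, val_hat, val_sum]
    exact add_le_add_left (Finset.le_sup (f := fun i => val (a i j)) (Finset.mem_univ i)) _
  obtain ⟨p, -, hp⟩ := Finset.exists_mem_eq_sup Finset.univ ⟨j₀, Finset.mem_univ _⟩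
    fun i => val (a i j₀)
  have hp_val : val (a p j₀ * x j₀) = val (hat (∑ i, a i j₀) * x j₀) := by
    rw [val_mul, val_mul, val_hat, val_sum, hp]
  have hp_tan : Tangible (a p j₀ * x j₀) := by
    refine tangible_mul_iff.2 ⟨(ha p j₀).resolve_left fun h0 => hj₀.ne_zero ?_,
      (tangible_mul_iff.1 hj₀).2⟩
    rw [← val_eq_bot_iff, ← hp_val, val_mul, h0]
    rfl
  have hc_eq : c = a p j₀ * x j₀ := by
    have hrow : ∑ j, a p j * x j = a p j₀ * x j₀ :=
      sum_eq_of_dominant (Finset.mem_univ j₀) fun j _ hj => hp_val ▸ hlt p j hj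
    exact eq_of_isGhost_add hc hp_tan (hrow ▸ h p)
  have hrow_lt : val (∑ j, a j₀ j * x j) < val c := by
    have hc_pos : ⊥ < val c := bot_lt_iff_ne_bot.2 (val_eq_bot_iff.not.2 (hc_eq ▸ hp_tan.ne_zero))
    rw [val_sum, Finset.sup_lt_iff hc_pos]
    intro j _
    rcases eq_or_ne j j₀ with rfl | hj
    · rwa [hdiag, zero_mul]
    · exact hc_eq ▸ hp_val ▸ hlt j₀ j hj
  have hghost := h j₀
  rw [add_eq_left_of_val_lt hrow_lt] at hghost
  exact (hc_eq ▸ hp_tan).not_isGhost hghost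

theorem tropDep_of_forall_isGhost_add_sum {ι : Type*} [Fintype ι] [Nonempty ι] {n : ℕ}
    {w : ι → Fin n → DR} {v : Fin n → DR} (hv : TangibleVec v) (hv0 : v ≠ 0) (a : ι → ι → DR)
    (ha : ∀ i j, TangibleOrBot (a i j)) (hdiag : ∀ i, a i i = 0)
    (h : ∀ i m, IsGhost (v m + ∑ j, a i j * w j m)) : TropDep w := by
  refine (tropDep_iff_exists_coeff w).2 ⟨fun j => hat (∑ i, a i j), fun j => tangibleOrBot_hat _,
    ?_, fun m => isGhost_sum_hat_sum_mul ha hdiag (hv m) fun i => h i m⟩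
  obtain ⟨m, hm⟩ := Function.ne_iff.1 hv0
  let i₀ := Classical.arbitrary ι
  have hsum : ∑ j, a i₀ j * w j m ≠ 0 := fun h0 =>
    ((hv m).resolve_left hm).not_isGhost (by simpa [h0] using h i₀ m)
  obtain ⟨j, -, hj⟩ := Finset.exists_ne_zero_of_sum_ne_zero hsum
  refine Function.ne_iff.2 ⟨j, fun h0 => hj ?_⟩
  rw [Pi.zero_apply, ← val_eq_bot_iff, val_hat, val_sum, Finset.sup_eq_bot_iff] at h0
  rw [val_eq_bot_iff.1 (h0 i₀ (Finset.mem_univ _)), zero_mul]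

theorem tropIndep_of_subsingleton {ι : Type*} [Fintype ι] [Subsingleton ι] {n : ℕ}
    {u : ι → Fin n → DR} (hu : ∀ i, TangibleVec (u i)) (hu0 : ∀ i, u i ≠ 0) : TropIndep u := by
  rintro ⟨I, ⟨i, hi⟩, α, hα, hghost⟩
  obtain ⟨m, hm⟩ := Function.ne_iff.1 (hu0 i)
  have hI : I = {i} := Finset.eq_singleton_iff_unique_mem.2 ⟨hi, fun j _ => Subsingleton.elim j i⟩
  have hterm : Tangible (α i * u i m) := tangible_mul_iff.2 ⟨hα i hi, (hu i m).resolve_left hm⟩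
  exact hterm.not_isGhost (by simpa [hI] using hghost m)

/-- Given tropically independent `v₁, …, v_k` and a tangible nonzero vector `v`,
some `k-1` of the `vᵢ` together with `v` are tropically independent. -/
theorem exchange_with_tangible_vector (n k : ℕ) (w : Fin k → Fin n → DR)
    (hw : TropIndep w) (v : Fin n → DR) (hv : TangibleVec v) (hv0 : v ≠ 0) :
    ∃ f : Fin (k - 1) → Fin k, StrictMono f ∧
      TropIndep (Fin.snoc (fun i => w (f i)) v : Fin (k - 1 + 1) → Fin n → DR) := by
  rcases k with _ | s
  · refine ⟨Fin.elim0, fun a => a.elim0,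
      tropIndep_of_subsingleton (ι := Fin 1) (fun i => ?_) (fun i => ?_)⟩ <;>
      rw [Subsingleton.elim i (Fin.last 0), Fin.snoc_last]
    exacts [hv, hv0]
  by_contra! hdep
  have hcomb (i : Fin (s + 1)) : ∃ b : Fin s → DR, (∀ j, TangibleOrBot (b j)) ∧
      ∀ m, IsGhost (v m + ∑ j, b j * w (i.succAbove j) m) :=
    exists_isGhost_add_sum_of_tropDep_snoc (hw.comp _ Fin.succAbove_right_injective)
      (not_not.1 (hdep _ (Fin.strictMono_succAbove i)))
  choose b hb hghost using hcomb
  refine hw (tropDep_of_forall_isGhost_add_sum hv hv0 (fun i => Fin.insertNth i 0 (b i))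
    (fun i j => ?_) (fun i => Fin.insertNth_apply_same _ _ _) fun i m => ?_)
  · rcases Fin.eq_self_or_eq_succAbove i j with rfl | ⟨j, rfl⟩
    · exact Or.inl (Fin.insertNth_apply_same _ _ _)
    · simpa only [Fin.insertNth_apply_succAbove] using hb i j
  · simpa [Fin.sum_univ_succAbove _ i] using hghost i m
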